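/- arXiv:2011.10777 — 2 statements merged into one kernel-verified Lean document; each statement's English description precedes it below -/
import Mathlib

section
/- (Diaz–Metcalf inequality) Let H be a real or complex inner product space, w ∈ H a unit vector, and v₁,…,v_N ∈ H nonzero vectors. If there is r ≥ 0 with r ≤ Re⟨v_n, w⟩/‖v_n‖ for all n, then r Σ_{n=1}^N ‖v_n‖ ≤ ‖Σ_{n=1}^N v_n‖. -/
open RCLike

theorem sum_re_inner_le_norm_sum {𝕜 H ι : Type*} [RCLike 𝕜] [NormedAddCommGroup H]
    [InnerProductSpace 𝕜 H] (s : Finset ι) (v : ι → H) {w : H} (hw : ‖w‖ = 1) :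
    ∑ i ∈ s, re (inner 𝕜 (v i) w : 𝕜) ≤ ‖∑ i ∈ s, v i‖ := by
  rw [← map_sum, ← sum_inner]
  simpa [hw] using re_inner_le_norm (𝕜 := 𝕜) (∑ i ∈ s, v i) w

theorem stmt13_general {𝕜 H : Type*} [RCLike 𝕜] [NormedAddCommGroup H] [InnerProductSpace 𝕜 H]
    (N : ℕ) (w : H) (hw : ‖w‖ = 1) (v : Fin N → H) (hv : ∀ n, v n ≠ 0)
    (r : ℝ)
    (h : ∀ n, r ≤ RCLike.re (inner 𝕜 (v n) w : 𝕜) / ‖v n‖) :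
    r * ∑ n, ‖v n‖ ≤ ‖∑ n, v n‖ := by
  calc r * ∑ n, ‖v n‖ = ∑ n, r * ‖v n‖ := Finset.mul_sum ..
    _ ≤ ∑ n, re (inner 𝕜 (v n) w : 𝕜) :=
        Finset.sum_le_sum fun n _ => (le_div_iff₀ (norm_pos_iff.mpr (hv n))).mp (h n)
    _ ≤ ‖∑ n, v n‖ := sum_re_inner_le_norm_sum _ v hw

theorem stmt13 {𝕜 H : Type*} [RCLike 𝕜] [NormedAddCommGroup H] [InnerProductSpace 𝕜 H]
    (N : ℕ) (w : H) (hw : ‖w‖ = 1) (v : Fin N → H) (hv : ∀ n, v n ≠ 0)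
    (r : ℝ) (hr : 0 ≤ r)
    (h : ∀ n, r ≤ RCLike.re (inner 𝕜 (v n) w : 𝕜) / ‖v n‖) :
    r * ∑ n, ‖v n‖ ≤ ‖∑ n, v n‖ :=
  stmt13_general N w hw v hv r h
end

section
/- Let M ≥ 2 and define φ₁ : ℝ → ℝ by φ₁(x) = 1 for |x| ≤ M/2, φ₁(x) = F(x)/F(M/2) for x ≥ M/2, and φ₁(x) = F(x)/F(−M/2) for x ≤ −M/2, where F(x) = (1/√π)∫_{−M}^M e^{−(x−y)²} dy. Then sup_{x∈ℝ} |F(x) − φ₁(x)| ≤ erfc(M/2) + erfc(3M/2). -/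
open MeasureTheory Real

noncomputable def erfc (x : ℝ) : ℝ := (2 / Real.sqrt π) * ∫ t in Set.Ioi x, Real.exp (-t^2)

noncomputable def Fconv (M x : ℝ) : ℝ := (1 / Real.sqrt π) * ∫ y in (-M)..M, Real.exp (-(x - y)^2)

noncomputable def phi₁ (M x : ℝ) : ℝ :=
  if |x| ≤ M / 2 then 1
  else if M / 2 ≤ x then Fconv M x / Fconv M (M / 2)
  else Fconv M x / Fconv M (-(M / 2))

/-!
Writing the Gaussian integrals through `erfc` gives `1 - F x = (erfc (M - x) + erfc (M + x)) / 2`.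
On `|x| ≤ M/2` both arguments are at least `M/2`, so `|F - φ₁| = 1 - F ≤ erfc (M/2)`. For
`x ≥ M/2` put `c = F (M/2)`; since `F` is even and decreasing on `[0, ∞)`, `0 ≤ F x ≤ c ≤ 1`, and
then `|F x - F x / c| = (F x / c) (1 - c) ≤ 1 - c = (erfc (M/2) + erfc (3M/2)) / 2`.
-/

lemma integrable_exp_neg_sq : Integrable (fun t : ℝ => exp (-t ^ 2)) := by
  simpa using integrable_exp_neg_mul_sq (b := 1) one_pos

lemma integral_exp_neg_sq : ∫ t : ℝ, exp (-t ^ 2) = √π := by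
  simpa using integral_gaussian 1

lemma setIntegral_Ioi_exp_neg_sq (a : ℝ) : ∫ t in Set.Ioi a, exp (-t ^ 2) = √π / 2 * erfc a := by
  have : 0 < √π := sqrt_pos.2 pi_pos
  rw [erfc]
  field_simp

lemma setIntegral_Iic_exp_neg_sq (a : ℝ) :
    ∫ t in Set.Iic a, exp (-t ^ 2) = √π / 2 * (2 - erfc a) := by
  have h := intervalIntegral.integral_Iic_add_Ioi (b := a)
    integrable_exp_neg_sq.integrableOn integrable_exp_neg_sq.integrableOn
  rw [integral_exp_neg_sq, setIntegral_Ioi_exp_neg_sq] at h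
  linarith

lemma intervalIntegral_exp_neg_sq (a b : ℝ) :
    ∫ t in a..b, exp (-t ^ 2) = √π / 2 * (erfc a - erfc b) := by
  rw [← intervalIntegral.integral_Iic_sub_Iic integrable_exp_neg_sq.integrableOn
    integrable_exp_neg_sq.integrableOn, setIntegral_Iic_exp_neg_sq, setIntegral_Iic_exp_neg_sq]
  ring

lemma erfc_neg (a : ℝ) : erfc (-a) = 2 - erfc a := by
  have h : ∫ t in Set.Ioi (-a), exp (-t ^ 2) = ∫ t in Set.Iic a, exp (-t ^ 2) := by
    rw [← integral_comp_neg_Iic a (fun t => exp (-t ^ 2))]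
    simp only [neg_sq]
  rw [setIntegral_Ioi_exp_neg_sq, setIntegral_Iic_exp_neg_sq] at h
  have : 0 < √π := sqrt_pos.2 pi_pos
  nlinarith

lemma erfc_nonneg (a : ℝ) : 0 ≤ erfc a :=
  mul_nonneg (by positivity) (setIntegral_nonneg measurableSet_Ioi fun t _ => (exp_pos _).le)

lemma erfc_antitone : Antitone erfc := fun a b hab =>
  mul_le_mul_of_nonneg_left
    (setIntegral_mono_set integrable_exp_neg_sq.integrableOn
      (.of_forall fun t => (exp_pos _).le) (Set.Ioi_subset_Ioi hab).eventuallyLE)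
    (by positivity)

lemma Fconv_eq_erfc (M x : ℝ) : Fconv M x = (erfc (x - M) - erfc (x + M)) / 2 := by
  have : 0 < √π := sqrt_pos.2 pi_pos
  rw [Fconv, intervalIntegral.integral_comp_sub_left (fun t => exp (-t ^ 2)) x, sub_neg_eq_add,
    intervalIntegral_exp_neg_sq]
  field_simp

lemma one_sub_Fconv (M x : ℝ) : 1 - Fconv M x = (erfc (M - x) + erfc (M + x)) / 2 := by
  rw [Fconv_eq_erfc, show x - M = -(M - x) by ring, erfc_neg, add_comm x]
  ring

lemma one_sub_Fconv_half (M : ℝ) :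
    1 - Fconv M (M / 2) = (erfc (M / 2) + erfc (3 * M / 2)) / 2 := by
  rw [one_sub_Fconv]
  ring_nf

lemma Fconv_neg (M x : ℝ) : Fconv M (-x) = Fconv M x := by
  rw [Fconv_eq_erfc, Fconv_eq_erfc, show -x - M = -(x + M) by ring,
    show -x + M = -(x - M) by ring, erfc_neg, erfc_neg]
  ring

lemma Fconv_le_one (M x : ℝ) : Fconv M x ≤ 1 := by
  linarith [one_sub_Fconv M x, erfc_nonneg (M - x), erfc_nonneg (M + x)]

lemma Fconv_nonneg {M : ℝ} (hM : 0 ≤ M) (x : ℝ) : 0 ≤ Fconv M x := by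
  rw [Fconv_eq_erfc]
  linarith [erfc_antitone (show x - M ≤ x + M by linarith)]

/-- The hypotheses say `|t| ≤ |t + c|` for `t ∈ [a, b]`. -/
lemma intervalIntegral_exp_neg_sq_add_le {a b c : ℝ} (hab : a ≤ b) (hc : 0 ≤ c)
    (ha : 0 ≤ 2 * a + c) :
    ∫ t in (a + c)..(b + c), exp (-t ^ 2) ≤ ∫ t in a..b, exp (-t ^ 2) := by
  rw [← intervalIntegral.integral_comp_add_right]
  refine intervalIntegral.integral_mono_on hab
    (integrable_exp_neg_sq.comp_add_right c).intervalIntegrable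
    integrable_exp_neg_sq.intervalIntegrable fun t ht => exp_le_exp.2 ?_
  nlinarith [ht.1]

lemma Fconv_antitoneOn {M : ℝ} (hM : 0 ≤ M) : AntitoneOn (Fconv M) (Set.Ici 0) := by
  intro a ha b _ hab
  have h := intervalIntegral_exp_neg_sq_add_le (a := a - M) (b := b - M) (c := 2 * M)
    (by linarith) (by linarith) (by linarith [Set.mem_Ici.1 ha])
  rw [show a - M + 2 * M = a + M by ring, show b - M + 2 * M = b + M by ring,
    intervalIntegral_exp_neg_sq, intervalIntegral_exp_neg_sq] at h
  have : 0 < √π := sqrt_pos.2 pi_pos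
  rw [Fconv_eq_erfc, Fconv_eq_erfc]
  nlinarith

lemma abs_sub_div_le_one_sub {a c : ℝ} (ha : 0 ≤ a) (hac : a ≤ c) (hc : c ≤ 1) :
    |a - a / c| ≤ 1 - c := by
  rcases (ha.trans hac).eq_or_lt with rfl | hc0
  · simp [le_antisymm hac ha]
  · have hq : a / c ≤ 1 := div_le_one_of_le₀ hac hc0.le
    have : a - a / c = -(a / c * (1 - c)) := by
      field_simp
      ring
    rw [this, abs_neg, abs_of_nonneg (mul_nonneg (by positivity) (by linarith))]
    nlinarith

lemma abs_Fconv_sub_div_Fconv_half_le {M x : ℝ} (hM : 0 ≤ M) (hx : M / 2 ≤ x) :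
    |Fconv M x - Fconv M x / Fconv M (M / 2)| ≤ 1 - Fconv M (M / 2) :=
  abs_sub_div_le_one_sub (Fconv_nonneg hM x)
    (Fconv_antitoneOn hM (Set.mem_Ici.2 (by linarith)) (Set.mem_Ici.2 (by linarith)) hx)
    (Fconv_le_one M _)

theorem stmt17 (M : ℝ) (hM : 2 ≤ M) :
    ∀ x : ℝ, |Fconv M x - phi₁ M x| ≤ erfc (M / 2) + erfc (3 * M / 2) := by
  intro x
  have hM0 : 0 ≤ M := by linarith
  have hhalf := one_sub_Fconv_half M
  have herfc := erfc_nonneg (M / 2)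
  have herfc' := erfc_nonneg (3 * M / 2)
  unfold phi₁
  split_ifs with hin hright
  · obtain ⟨hxl, hxr⟩ := abs_le.1 hin
    rw [abs_sub_comm, abs_of_nonneg (by linarith [Fconv_le_one M x]), one_sub_Fconv]
    linarith [erfc_antitone (show M / 2 ≤ M - x by linarith),
      erfc_antitone (show M / 2 ≤ M + x by linarith)]
  · linarith [abs_Fconv_sub_div_Fconv_half_le hM0 hright]
  · have hleft : M / 2 ≤ -x := ((lt_abs.1 (not_le.1 hin)).resolve_left (hright ∘ le_of_lt)).le
    rw [Fconv_neg, ← Fconv_neg M x]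
    linarith [abs_Fconv_sub_div_Fconv_half_le hM0 hleft]
end
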